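/- arXiv:1911.06705 — 2 statements merged into one kernel-verified Lean document; each statement's English description precedes it below -/
import Mathlib

section
/- If a simple digraph D on n vertices satisfies F(D) < Z(D), then Z(D) ∈ {1, 2, n−2, n−1, n}, and moreover if Z(D) = 2 then n ≤ 5. -/
/-- The set of out-neighbors of `v` in the digraph with arc relation `A`. -/
def Nout {V : Type} (A : V → V → Prop) (v : V) : Set V := {w | A v w}

/-- The set of in-neighbors of `v`. -/
def Nin {V : Type} (A : V → V → Prop) (v : V) : Set V := {w | A w v}

/-- One application of the color change rule to the set `S` of filled vertices. -/
def Bstep {V : Type} (A : V → V → Prop) (S : Set V) : Set V :=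
  S ∪ {w | ∃ v ∈ S, Nout A v \ S = {w}}

/-- `S` is a zero forcing set: iterating the color change rule fills all vertices. -/
def IsZFS {V : Type} (A : V → V → Prop) (S : Set V) : Prop :=
  ∃ t, (Bstep A)^[t] S = Set.univ

/-- The failed zero forcing number: the maximum cardinality of a failed zero forcing set. -/
noncomputable def Fnum {V : Type} (A : V → V → Prop) : ℕ :=
  sSup {k | ∃ S : Set V, ¬ IsZFS A S ∧ S.ncard = k}

/-- The zero forcing number: the minimum cardinality of a zero forcing set. -/
noncomputable def Znum {V : Type} (A : V → V → Prop) : ℕ :=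
  sInf {k | ∃ S : Set V, IsZFS A S ∧ S.ncard = k}

/-- `W` is a critical set: `W` is nonempty and no vertex outside `W` has exactly one
out-neighbor in `W`. -/
def IsCritical {V : Type} (A : V → V → Prop) (W : Set V) : Prop :=
  W.Nonempty ∧ ∀ v ∈ Wᶜ, (Nout A v ∩ W).ncard ≠ 1

/-- `D` is a directed cycle: either a single vertex with no arcs, or the vertices can be
cyclically labeled so that the arcs are exactly the consecutive ones. -/
def IsDirectedCycle {V : Type} [Fintype V] (A : V → V → Prop) : Prop :=
  (Fintype.card V = 1 ∧ ∀ u v : V, ¬ A u v) ∨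
  (2 ≤ Fintype.card V ∧ ∃ e : ZMod (Fintype.card V) ≃ V,
      ∀ i j : ZMod (Fintype.card V), A (e i) (e j) ↔ j = i + 1)

section Aux

variable {V : Type} [Fintype V] (A : V → V → Prop)

lemma subset_bstep (S : Set V) : S ⊆ Bstep A S := Set.subset_union_left

lemma bstep_univ : Bstep A (Set.univ : Set V) = Set.univ :=
  (Set.subset_univ _).antisymm (subset_bstep A _)

lemma subset_iterate (S : Set V) (t : ℕ) : S ⊆ (Bstep A)^[t] S := by
  induction t with
  | zero => exact le_rfl
  | succ m ih =>
    rw [Function.iterate_succ_apply']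
    exact ih.trans (subset_bstep A _)

lemma ncard_le_cardV (S : Set V) : S.ncard ≤ Fintype.card V := by
  have := Set.ncard_le_ncard (Set.subset_univ S) Set.finite_univ
  rwa [Set.ncard_univ, Nat.card_eq_fintype_card] at this

lemma exists_closure (S : Set V) :
    ∃ T : Set V, S ⊆ T ∧ Bstep A T = T ∧ (T = Set.univ ↔ IsZFS A S) := by
  have hfix : ∃ t, Bstep A ((Bstep A)^[t] S) = (Bstep A)^[t] S := by
    by_contra hc
    push_neg at hc
    have hmono : StrictMono (fun t => ((Bstep A)^[t] S).ncard) := by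
      apply strictMono_nat_of_lt_succ
      intro t
      have h1 : (Bstep A)^[t] S ⊂ (Bstep A)^[t + 1] S := by
        rw [Function.iterate_succ_apply']
        exact (subset_bstep A _).ssubset_of_ne (fun he => hc t he.symm)
      exact Set.ncard_lt_ncard h1 (Set.toFinite _)
    have h2 : Fintype.card V + 1 ≤ ((Bstep A)^[Fintype.card V + 1] S).ncard :=
      hmono.le_apply
    have h3 := ncard_le_cardV ((Bstep A)^[Fintype.card V + 1] S)
    omega
  obtain ⟨t, ht⟩ := hfix
  refine ⟨(Bstep A)^[t] S, subset_iterate A S t, ht, ?_, ?_⟩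
  · intro hu
    exact ⟨t, hu⟩
  · rintro ⟨u, hu⟩
    rcases le_total t u with htu | htu
    · have : (Bstep A)^[u] S = (Bstep A)^[u - t] ((Bstep A)^[t] S) := by
        rw [← Function.iterate_add_apply, Nat.sub_add_cancel htu]
      rw [this, Function.iterate_fixed ht] at hu
      exact hu
    · have : (Bstep A)^[t] S = (Bstep A)^[t - u] ((Bstep A)^[u] S) := by
        rw [← Function.iterate_add_apply, Nat.sub_add_cancel htu]
      rw [this, hu, Function.iterate_fixed (bstep_univ A)]

lemma stalled_not_zfs {T : Set V} (hT : Bstep A T = T) (hne : T ≠ Set.univ) :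
    ¬ IsZFS A T := by
  rintro ⟨u, hu⟩
  rw [Function.iterate_fixed hT] at hu
  exact hne hu

lemma failed_le_fnum {S : Set V} (hS : ¬ IsZFS A S) : S.ncard ≤ Fnum A :=
  le_csSup ⟨Fintype.card V, by rintro k ⟨S', -, rfl⟩; exact ncard_le_cardV S'⟩
    ⟨S, hS, rfl⟩

lemma znum_le {S : Set V} (hS : IsZFS A S) : Znum A ≤ S.ncard :=
  Nat.sInf_le ⟨S, hS, rfl⟩

lemma znum_le_card : Znum A ≤ Fintype.card V := by
  have h := znum_le A (S := Set.univ) ⟨0, rfl⟩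
  rwa [Set.ncard_univ, Nat.card_eq_fintype_card] at h

lemma stalled_ncard_lt (h : Fnum A < Znum A) {T : Set V} (hT : Bstep A T = T)
    (hne : T ≠ Set.univ) : T.ncard < Znum A :=
  lt_of_le_of_lt (failed_le_fnum A (stalled_not_zfs A hT hne)) h

lemma outdeg_ge (h : Fnum A < Znum A) (hA : Irreflexive A) (v : V)
    (hv : (Nout A v).Nonempty) : Znum A ≤ (Nout A v).ncard := by
  by_contra hlt
  push_neg at hlt
  obtain ⟨w, hw⟩ := hv
  have hvN : v ∉ Nout A v := fun hc => hA v hc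
  have hwv : w ≠ v := fun hc => hA v (hc ▸ hw)
  set k := Znum A with hk
  set d := (Nout A v).ncard with hd
  have hd1 : 1 ≤ d := (Set.ncard_pos (Set.toFinite _)).mpr ⟨w, hw⟩
  set S0 : Set V := insert v (Nout A v \ {w}) with hS0
  have hvS0 : v ∈ S0 := Set.mem_insert _ _
  have hwS0 : w ∉ S0 := by
    simp only [hS0, Set.mem_insert_iff, Set.mem_diff, Set.mem_singleton_iff]
    tauto
  have hS0card : S0.ncard = d := by
    rw [hS0, Set.ncard_insert_of_notMem (by simp [hvN]) (Set.toFinite _),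
      Set.ncard_diff_singleton_of_mem hw]
    omega
  have hicard : (insert w S0).ncard = d + 1 := by
    rw [Set.ncard_insert_of_notMem hwS0 (Set.toFinite _), hS0card]
  have hkn : k ≤ Fintype.card V := znum_le_card A
  have hcompl : k - 1 - d ≤ (insert w S0)ᶜ.ncard := by
    have := Set.ncard_add_ncard_compl (insert w S0)
    rw [Nat.card_eq_fintype_card] at this
    omega
  obtain ⟨X, hXsub, hXcard⟩ := Set.exists_subset_card_eq hcompl
  set S' := S0 ∪ X with hS'
  have hdisj : Disjoint S0 X := by
    rw [Set.disjoint_right]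
    intro x hxX hxS0
    exact (hXsub hxX) (Set.mem_insert_of_mem _ hxS0)
  have hS'card : S'.ncard = k - 1 := by
    rw [hS', Set.ncard_union_eq hdisj (Set.toFinite _) (Set.toFinite _), hS0card, hXcard]
    omega
  have hwS' : w ∉ S' := by
    rintro (hc | hc)
    · exact hwS0 hc
    · exact (hXsub hc) (Set.mem_insert _ _)
  have hvS' : v ∈ S' := Or.inl hvS0
  have hNoutS' : Nout A v \ S' = {w} := by
    apply Set.eq_singleton_iff_unique_mem.mpr
    refine ⟨⟨hw, hwS'⟩, ?_⟩
    rintro x ⟨hxN, hxS'⟩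
    by_contra hxw
    exact hxS' (Or.inl (Set.mem_insert_of_mem _ ⟨hxN, hxw⟩))
  obtain ⟨T, hsub, hTfix, hTiff⟩ := exists_closure A S'
  have hTne : T ≠ Set.univ := by
    intro hu
    have := znum_le A (hTiff.mp hu)
    omega
  have hTlt : T.ncard < k := stalled_ncard_lt A h hTfix hTne
  have hwT : w ∈ T := by
    by_contra hwT
    have hNT : Nout A v \ T = {w} := by
      apply Set.eq_singleton_iff_unique_mem.mpr
      refine ⟨⟨hw, hwT⟩, ?_⟩
      rintro x ⟨hxN, hxT⟩
      have : x ∈ Nout A v \ S' := ⟨hxN, fun hc => hxT (hsub hc)⟩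
      rw [hNoutS'] at this
      exact this
    have : w ∈ Bstep A T := Or.inr ⟨v, hsub hvS', hNT⟩
    rw [hTfix] at this
    exact hwT this
  have hins : insert w S' ⊆ T := Set.insert_subset hwT hsub
  have := Set.ncard_le_ncard hins (Set.toFinite _)
  rw [Set.ncard_insert_of_notMem hwS' (Set.toFinite _), hS'card] at this
  omega

lemma serving (h : Fnum A < Znum A) (hA : Irreflexive A)
    (hkn : Znum A < Fintype.card V) (S : Set V) (hS : S.ncard = Znum A) :
    ∃ v w, v ∈ S ∧ w ∈ Nout A v ∧ (Nout A v).ncard = Znum A ∧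
      S = insert v (Nout A v \ {w}) := by
  set k := Znum A with hk
  obtain ⟨T, hsub, hfix, hiff⟩ := exists_closure A S
  have hZ : IsZFS A S := by
    rw [← hiff]
    by_contra hne
    have h1 := stalled_ncard_lt A h hfix hne
    have h2 := Set.ncard_le_ncard hsub (Set.toFinite _)
    omega
  have hSne : S ≠ Set.univ := by
    intro he
    rw [he, Set.ncard_univ, Nat.card_eq_fintype_card] at hS
    omega
  have hstep : Bstep A S ≠ S := fun hfixS => (stalled_not_zfs A hfixS hSne) hZ
  have hex : ∃ w, w ∈ Bstep A S ∧ w ∉ S := by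
    by_contra hc
    push_neg at hc
    exact hstep (Set.Subset.antisymm (fun x hx => hc x hx) (subset_bstep A S))
  obtain ⟨w, hwB, hwS⟩ := hex
  rcases hwB with hwB | ⟨v, hvS, hvw⟩
  · exact absurd hwB hwS
  have hwN : w ∈ Nout A v := by
    have : w ∈ Nout A v \ S := by rw [hvw]; exact rfl
    exact this.1
  have hvN : v ∉ Nout A v := fun hc => hA v hc
  have hk1 : 1 ≤ k := by
    rw [← hS]
    exact (Set.ncard_pos (Set.toFinite _)).mpr ⟨v, hvS⟩
  have hsub2 : Nout A v ⊆ insert w (S \ {v}) := by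
    intro x hx
    by_cases hxS : x ∈ S
    · exact Set.mem_insert_of_mem _ ⟨hxS, fun hc => hvN (hc ▸ hx)⟩
    · have : x ∈ Nout A v \ S := ⟨hx, hxS⟩
      rw [hvw] at this
      exact Set.mem_insert_iff.mpr (Or.inl this)
  have hwSv : w ∉ S \ {v} := fun hc => hwS hc.1
  have hcard2 : (insert w (S \ {v})).ncard = k := by
    rw [Set.ncard_insert_of_notMem hwSv (Set.toFinite _),
      Set.ncard_diff_singleton_of_mem hvS, hS]
    omega
  have hge : k ≤ (Nout A v).ncard := outdeg_ge A h hA v ⟨w, hwN⟩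
  have heq : Nout A v = insert w (S \ {v}) := by
    apply Set.eq_of_subset_of_ncard_le hsub2 _ (Set.toFinite _)
    rw [hcard2]
    exact hge
  refine ⟨v, w, hvS, hwN, ?_, ?_⟩
  · rw [heq, hcard2]
  · rw [heq, Set.insert_diff_self_of_notMem hwSv, Set.insert_diff_singleton,
      Set.insert_eq_self.mpr hvS]

lemma counting (h : Fnum A < Znum A) (hA : Irreflexive A)
    (hk3 : Znum A + 3 ≤ Fintype.card V) :
    (Fintype.card V).choose (Znum A) ≤ Fintype.card V * Znum A := by
  classical
  set k := Znum A with hk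
  set n := Fintype.card V with hn
  have hnV : Nonempty V := by
    rw [← Fintype.card_pos_iff]
    omega
  set P := Finset.powersetCard k (Finset.univ : Finset V) with hP
  set T : Finset (V × V) :=
    Finset.univ.filter (fun p => p.2 ∈ Nout A p.1 ∧ (Nout A p.1).ncard = k) with hT
  have hmap : ∀ S ∈ P, ∃ p : V × V, p ∈ T ∧ (S : Set V) = insert p.1 (Nout A p.1 \ {p.2}) := by
    intro S hSP
    have hcard : (S : Set V).ncard = k := by
      rw [Set.ncard_coe_finset]
      exact (Finset.mem_powersetCard.mp hSP).2
    obtain ⟨v, w, hvS, hwN, hNc, hEq⟩ := serving A h hA (by omega) _ hcard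
    exact ⟨(v, w), by simp [hT, Finset.mem_filter, hwN, hNc, hk], hEq⟩
  choose f hfT hfEq using hmap
  have hinj : ∀ S1 ∈ P, ∀ S2 ∈ P,
      (fun S => if hS : S ∈ P then f S hS else (Classical.arbitrary V, Classical.arbitrary V)) S1 =
      (fun S => if hS : S ∈ P then f S hS else (Classical.arbitrary V, Classical.arbitrary V)) S2 →
      S1 = S2 := by
    intro S1 h1 S2 h2 heq
    simp only [dif_pos h1, dif_pos h2] at heq
    apply Finset.coe_injective
    rw [hfEq S1 h1, hfEq S2 h2, heq]
  have hPT : P.card ≤ T.card := by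
    apply Finset.card_le_card_of_injOn
      (fun S => if hS : S ∈ P then f S hS else (Classical.arbitrary V, Classical.arbitrary V))
    · intro S hS
      simp only [dif_pos hS]
      exact Finset.mem_coe.mpr (by rw [dif_pos (show S ∈ P from hS)]; exact hfT S hS)
    · intro S1 h1 S2 h2 heq
      exact hinj S1 h1 S2 h2 heq
  have hPcard : P.card = n.choose k := by
    rw [hP, Finset.card_powersetCard, Finset.card_univ]
  set gfun : V → Finset (V × V) := fun v =>
    if (Nout A v).ncard = k then (Set.toFinite (Nout A v)).toFinset.image (fun w => (v, w))
    else ∅ with hg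
  have hTsub : T ⊆ Finset.univ.biUnion gfun := by
    intro p hp
    rw [hT, Finset.mem_filter] at hp
    obtain ⟨-, hpN, hpc⟩ := hp
    rw [Finset.mem_biUnion]
    refine ⟨p.1, Finset.mem_univ _, ?_⟩
    rw [hg]
    simp only [if_pos hpc, Finset.mem_image, Set.Finite.mem_toFinset]
    exact ⟨p.2, hpN, rfl⟩
  have hTcard : T.card ≤ n * k := by
    calc T.card ≤ (Finset.univ.biUnion gfun).card := Finset.card_le_card hTsub
    _ ≤ ∑ v : V, (gfun v).card := Finset.card_biUnion_le
    _ ≤ ∑ _v : V, k := by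
        apply Finset.sum_le_sum
        intro v _
        rw [hg]
        dsimp only
        split_ifs with hc
        · calc ((Set.toFinite (Nout A v)).toFinset.image (fun w => (v, w))).card
              ≤ (Set.toFinite (Nout A v)).toFinset.card := Finset.card_image_le
          _ = k := by rw [← Set.ncard_eq_toFinset_card (Nout A v)]; exact hc
        · simp
    _ = n * k := by rw [Finset.sum_const, Finset.card_univ, smul_eq_mul]
  omega

lemma choose_three_le {n k : ℕ} (h3 : 3 ≤ k) (hkn : k + 3 ≤ n) :
    n.choose 3 ≤ n.choose k := by
  have hmono : ∀ a b : ℕ, a ≤ b → b ≤ n / 2 → n.choose a ≤ n.choose b := by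
    intro a b hab
    induction b with
    | zero => intro _; interval_cases a; exact le_rfl
    | succ m ih =>
      intro hm
      rcases Nat.lt_or_ge a (m + 1) with hlt | hge
      · exact (ih (by omega) (by omega)).trans
          (Nat.choose_le_succ_of_lt_half_left (by omega))
      · have : a = m + 1 := by omega
        rw [this]
  rcases le_or_gt k (n / 2) with hhalf | hhalf
  · exact hmono 3 k h3 hhalf
  · rw [← Nat.choose_symm (by omega : k ≤ n)]
    have h32 : 3 ≤ n / 2 := by omega
    exact hmono 3 (n - k) (by omega) (by omega)
end Aux

theorem stmt_10 {V : Type} [Fintype V] (A : V → V → Prop) (hA : Irreflexive A)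
    (h : Fnum A < Znum A) :
    (Znum A = 1 ∨ Znum A = 2 ∨ Znum A = Fintype.card V - 2 ∨
      Znum A = Fintype.card V - 1 ∨ Znum A = Fintype.card V) ∧
    (Znum A = 2 → Fintype.card V ≤ 5) := by
  set n := Fintype.card V with hn
  set k := Znum A with hk
  have hkn : k ≤ n := znum_le_card A
  have hk0 : k ≠ 0 := by
    intro h0
    omega
  have key : 2 ≤ k → k + 3 ≤ n → n.choose k ≤ n * k := fun _ h2 => counting A h hA h2
  constructor
  · rcases Nat.lt_or_ge k 3 with hsmall | hbig
    · have : k = 1 ∨ k = 2 := by omega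
      rcases this with h1 | h1
      · exact Or.inl h1
      · exact Or.inr (Or.inl h1)
    · rcases Nat.lt_or_ge k (n - 2) with hmid | hlarge
      · exfalso
        have hle : k + 3 ≤ n := by omega
        have hc := key (by omega) hle
        have h3k := choose_three_le hbig hle
        have hdesc : n.descFactorial 3 = 6 * n.choose 3 := by
          rw [Nat.descFactorial_eq_factorial_mul_choose]
          norm_num [Nat.factorial]
        have hdesc2 : n.descFactorial 3 = (n - 2) * ((n - 1) * (n * 1)) := rfl
        have hnk : n * k ≤ n * (n - 3) := Nat.mul_le_mul_left n (by omega)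
        have hmain : n.choose 3 ≤ n * (n - 3) := le_trans (le_trans h3k hc) hnk
        have hup : (n - 2) * ((n - 1) * (n * 1)) ≤ 6 * (n * (n - 3)) := by
          rw [← hdesc2, hdesc]
          exact Nat.mul_le_mul_left 6 hmain
        have hn6 : 6 ≤ n := by omega
        obtain ⟨a, ha⟩ : ∃ a, n = a + 6 := ⟨n - 6, by omega⟩
        rw [ha] at hup
        have hup' : (a + 4) * ((a + 5) * ((a + 6) * 1)) ≤ 6 * ((a + 6) * (a + 3)) := by
          have e1 : a + 6 - 2 = a + 4 := by omega
          have e2 : a + 6 - 1 = a + 5 := by omega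
          have e3 : a + 6 - 3 = a + 3 := by omega
          rw [e1, e2, e3] at hup
          exact hup
        have hexp : (a + 4) * ((a + 5) * ((a + 6) * 1)) = a * a * a + 15 * (a * a) + 74 * a + 120 := by
          ring
        have hexp2 : 6 * ((a + 6) * (a + 3)) = 6 * (a * a) + 54 * a + 108 := by ring
        rw [hexp, hexp2] at hup'
        generalize a * a * a = c3 at hup'
        generalize a * a = b2 at hup'
        omega
      · right; right
        omega
  · intro h2
    by_contra hn6
    push_neg at hn6
    have hc := key (by omega) (by omega)
    rw [h2] at hc
    have hdesc : n.descFactorial 2 = 2 * n.choose 2 := by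
      rw [Nat.descFactorial_eq_factorial_mul_choose]
      norm_num [Nat.factorial]
    have hdesc2 : n.descFactorial 2 = (n - 1) * (n * 1) := rfl
    have hup : (n - 1) * (n * 1) ≤ 2 * (n * 2) := by
      rw [← hdesc2, hdesc]
      exact Nat.mul_le_mul_left 2 hc
    obtain ⟨a, ha⟩ : ∃ a, n = a + 6 := ⟨n - 6, by omega⟩
    rw [ha] at hup
    have e2 : a + 6 - 1 = a + 5 := by omega
    rw [e2] at hup
    have hexp : (a + 5) * ((a + 6) * 1) = a * a + 11 * a + 30 := by ring
    have hexp2 : 2 * ((a + 6) * 2) = 4 * a + 24 := by ring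
    rw [hexp, hexp2] at hup
    generalize a * a = b2 at hup
    omega
end

section
/- For the outjoin D = K_j →∨ K̄_ℓ with j ≥ 2 and ℓ ≥ 0, we have F(D) = n − 2 < n − 1 = Z(D), where n = j + ℓ: every (n−1)-subset of V(D) is a zero forcing set and every (n−2)-subset is a failed zero forcing set. -/
/-- The outjoin of the complete digraph `K_j` to the empty digraph on `ℓ` vertices. -/
def outjoinKEmpty (j ℓ : ℕ) : (Fin j ⊕ Fin ℓ) → (Fin j ⊕ Fin ℓ) → Prop
  | .inl a, .inl b => a ≠ b
  | .inl _, .inr _ => True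
  | .inr _, _ => False

/-! In `K_j →∨ K̄_ℓ` every vertex of `K_j` has all other vertices as out-neighbours and every
vertex of `K̄_ℓ` has none. Hence a filled set missing two vertices is stalled (each filled vertex
sees either no empty out-neighbour or both), while a filled set missing one vertex `w` still
contains a vertex of `K_j` other than `w` (as `j ≥ 2`), which forces `w`. So a set is zero
forcing exactly when it has at least `n - 1` vertices, which determines both `Z` and `F`. -/

section ZeroForcing

variable {V : Type} {A : V → V → Prop} {S : Set V}

lemma isZFS_univ : IsZFS A Set.univ := ⟨0, rfl⟩

lemma not_isZFS_of_bstep_eq_self (hfix : Bstep A S = S) (hS : S ≠ Set.univ) : ¬ IsZFS A S := by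
  rintro ⟨t, ht⟩
  rw [Function.iterate_fixed hfix] at ht
  exact hS ht

lemma isZFS_of_compl_eq_singleton {v w : V} (hv : v ∈ S) (hw : Sᶜ = {w}) (hvw : A v w) :
    IsZFS A S := by
  have hforce : Nout A v \ S = {w} := by
    rw [Set.sdiff_eq, hw, Set.inter_eq_right, Set.singleton_subset_iff]
    exact hvw
  refine ⟨1, Set.eq_univ_of_forall fun x => ?_⟩
  by_cases hx : x ∈ S
  · exact Or.inl hx
  · obtain rfl : x = w := by rw [← Set.mem_singleton_iff, ← hw]; exact hx
    exact Or.inr ⟨v, hv, hforce⟩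

lemma znum_eq_of_isZFS_iff [Finite V] {m : ℕ} (hm : m ≤ Nat.card V)
    (h : ∀ S : Set V, IsZFS A S ↔ m ≤ S.ncard) : Znum A = m := by
  obtain ⟨T, -, hT⟩ := Set.exists_subset_card_eq (s := (Set.univ : Set V)) (by simpa using hm)
  have hmem : m ∈ {k | ∃ S : Set V, IsZFS A S ∧ S.ncard = k} := ⟨T, (h T).2 hT.ge, hT⟩
  refine le_antisymm (Nat.sInf_le hmem) (le_csInf ⟨m, hmem⟩ ?_)
  rintro k ⟨S, hS, rfl⟩
  exact (h S).1 hS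

lemma fnum_eq_of_isZFS_iff [Finite V] {m : ℕ} (hm0 : 0 < m) (hm : m ≤ Nat.card V)
    (h : ∀ S : Set V, IsZFS A S ↔ m ≤ S.ncard) : Fnum A = m - 1 := by
  obtain ⟨T, -, hT⟩ :=
    Set.exists_subset_card_eq (s := (Set.univ : Set V)) (n := m - 1) (by simp; omega)
  have hmem : m - 1 ∈ {k | ∃ S : Set V, ¬ IsZFS A S ∧ S.ncard = k} :=
    ⟨T, by rw [h]; omega, hT⟩
  refine le_antisymm (csSup_le ⟨m - 1, hmem⟩ ?_) (le_csSup ⟨m, ?_⟩ hmem)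
  all_goals
    rintro k ⟨S, hS, rfl⟩
    rw [h] at hS
    omega

end ZeroForcing

section Outjoin

variable {j ℓ : ℕ}

lemma outjoinKEmpty_inl_iff (a : Fin j) (x : Fin j ⊕ Fin ℓ) :
    outjoinKEmpty j ℓ (.inl a) x ↔ x ≠ .inl a := by
  cases x <;> simp [outjoinKEmpty, eq_comm]

lemma not_outjoinKEmpty_inr (c : Fin ℓ) (x : Fin j ⊕ Fin ℓ) : ¬ outjoinKEmpty j ℓ (.inr c) x := by
  cases x <;> simp [outjoinKEmpty]

lemma bstep_outjoinKEmpty_eq_self {S : Set (Fin j ⊕ Fin ℓ)} {u v : Fin j ⊕ Fin ℓ}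
    (hu : u ∉ S) (hv : v ∉ S) (huv : u ≠ v) : Bstep (outjoinKEmpty j ℓ) S = S := by
  refine Set.union_eq_left.2 ?_
  rintro w ⟨x, hxS, hx⟩
  cases x with
  | inr c => simpa [Nout, not_outjoinKEmpty_inr] using congrArg (w ∈ ·) hx
  | inl a =>
    have hmem : ∀ y ∉ S, y ≠ .inl a → y = w := fun y hyS hya => by
      rw [← Set.mem_singleton_iff, ← hx]
      exact ⟨(outjoinKEmpty_inl_iff a y).2 hya, hyS⟩
    have hu_w := hmem u hu fun h => hu (h ▸ hxS)
    have hv_w := hmem v hv fun h => hv (h ▸ hxS)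
    exact (huv (hu_w.trans hv_w.symm)).elim

theorem isZFS_outjoinKEmpty_iff (hj : 2 ≤ j) (S : Set (Fin j ⊕ Fin ℓ)) :
    IsZFS (outjoinKEmpty j ℓ) S ↔ Sᶜ.ncard ≤ 1 := by
  constructor
  · intro hS
    by_contra! h2
    obtain ⟨u, v, hu, hv, huv⟩ := (Set.one_lt_ncard_iff (Set.toFinite _)).1 h2
    exact not_isZFS_of_bstep_eq_self (bstep_outjoinKEmpty_eq_self hu hv huv)
      (fun h => hu (h ▸ Set.mem_univ u)) hS
  · intro h1
    rcases Nat.le_one_iff_eq_zero_or_eq_one.1 h1 with h0 | h1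
    · rw [Set.ncard_eq_zero, Set.compl_empty_iff] at h0
      exact h0 ▸ isZFS_univ
    · obtain ⟨w, hw⟩ := Set.ncard_eq_one.1 h1
      have hfilled : ∀ a : Fin j, Sum.inl a ≠ w → Sum.inl a ∈ S := fun a haw => by
        by_contra haS
        exact haw (by rw [← Set.mem_singleton_iff, ← hw]; exact haS)
      obtain ⟨a, haw⟩ : ∃ a : Fin j, Sum.inl a ≠ w := by
        by_contra! h
        have := (h ⟨0, by omega⟩).trans (h ⟨1, by omega⟩).symm
        simp [Fin.ext_iff] at this
      exact isZFS_of_compl_eq_singleton (hfilled a haw) hw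
        ((outjoinKEmpty_inl_iff a w).2 haw.symm)

theorem isZFS_outjoinKEmpty_iff_le_ncard (hj : 2 ≤ j) (S : Set (Fin j ⊕ Fin ℓ)) :
    IsZFS (outjoinKEmpty j ℓ) S ↔ j + ℓ - 1 ≤ S.ncard := by
  have hcard : S.ncard + Sᶜ.ncard = j + ℓ := by
    rw [Set.ncard_add_ncard_compl]; simp
  rw [isZFS_outjoinKEmpty_iff hj]
  omega

end Outjoin

theorem stmt_13 (j ℓ : ℕ) (hj : 2 ≤ j) :
    Fnum (outjoinKEmpty j ℓ) = j + ℓ - 2 ∧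
    Znum (outjoinKEmpty j ℓ) = j + ℓ - 1 ∧
    (∀ S : Set (Fin j ⊕ Fin ℓ), S.ncard = j + ℓ - 1 → IsZFS (outjoinKEmpty j ℓ) S) ∧
    (∀ S : Set (Fin j ⊕ Fin ℓ), S.ncard = j + ℓ - 2 → ¬ IsZFS (outjoinKEmpty j ℓ) S) := by
  have hiff := isZFS_outjoinKEmpty_iff_le_ncard (ℓ := ℓ) hj
  have hcard : j + ℓ - 1 ≤ Nat.card (Fin j ⊕ Fin ℓ) := by simp
  refine ⟨?_, znum_eq_of_isZFS_iff hcard hiff, fun S hS => (hiff S).2 hS.ge,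
    fun S hS => by rw [hiff]; omega⟩
  rw [fnum_eq_of_isZFS_iff (by omega) hcard hiff]
  omega
end
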